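/- Let k be a field, let Σ be an S-graph all of whose vertices are internal, and let n be a positive integer compatible with Σ. Fix for each edge f of Σ one of its two halfedges i_f. Then the images in A(Σ,n) of the following paths form a k-basis of A(Σ,n): (1) the idempotent e_f at the quiver vertex corresponding to each edge f; (2) for each vertex v of Σ, each ordered pair (i,j) of halfedges at v, and each integer r with 0 ≤ r < n/deg(v) and (i,j,r) not of the form (i,i,0), the path a^r_{i,j} := a_{i−1} ⋯ a_{j+1} a_j (a_{j−1} ⋯ a_{j+1} a_j)^r, which is homogeneous of degree d(j,i) + r·deg(v); (3) the cycle c_{i_f} of degree n, one for each edge f. In particular, A(Σ,n) is finite-dimensional of dimension dim_k A(Σ,n) = Σ_{v ∈ V} val(v)² · n/deg(v), where val(v) is the number of halfedges at v. -/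

import Mathlib

/-- An S-graph all of whose vertices are internal: a finite set of halfedges with a
fixed-point-free involution `τ` (whose orbits are the edges), a vertex map `vtx`, a cyclic
order on the halfedges at each vertex (encoded by the cyclic successor map `succ`), and a
positive integer `d i = d(i, i+1)` for every halfedge `i`. -/
structure SGraph where
  /-- the type of halfedges -/
  H : Type
  fintypeH : Fintype H
  decEqH : DecidableEq H
  /-- the type of vertices -/
  V : Type
  fintypeV : Fintype V
  decEqV : DecidableEq V
  /-- the edge involution -/
  τ : H → H
  τ_invol : ∀ i, τ (τ i) = i
  τ_ne : ∀ i, τ i ≠ i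
  /-- the vertex to which a halfedge is attached -/
  vtx : H → V
  /-- the cyclic successor `i ↦ i + 1` among the halfedges at a common vertex -/
  succ : H → H
  vtx_succ : ∀ i, vtx (succ i) = vtx i
  cyclic : ∀ i j, vtx i = vtx j → ∃ m, succ^[m] i = j
  /-- `d i = d(i, i+1)` -/
  d : H → ℕ
  d_pos : ∀ i, 0 < d i

attribute [instance] SGraph.fintypeH SGraph.decEqH SGraph.fintypeV SGraph.decEqV

namespace SGraph

variable (Sg : SGraph)

/-- The halfedges attached to a given vertex. -/
def halfedgesAt (v : Sg.V) : Finset Sg.H := Finset.univ.filter fun i => Sg.vtx i = v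

/-- The degree of a vertex: the sum of `d(i, i+1)` over the halfedges at it. -/
def deg (v : Sg.V) : ℕ := ∑ i ∈ Sg.halfedgesAt v, Sg.d i

/-- The valency of a vertex: the number of halfedges at it. -/
def val (v : Sg.V) : ℕ := (Sg.halfedgesAt v).card

/-- The number of `succ`-steps from the halfedge `j` to the halfedge `i`
(`0` by convention if `i` is not on the `succ`-orbit of `j`). -/
noncomputable def distTo (j i : Sg.H) : ℕ := by
  classical
  exact if h : ∃ m, Sg.succ^[m] j = i then Nat.find h else 0

/-- `d(j, i)` for halfedges `j`, `i` at a common vertex: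
`d(j,i) = d(j,j+1) + d(j+1,j+2) + ⋯ + d(i−1,i)` (so `d(j,j) = 0`). -/
noncomputable def dTo (j i : Sg.H) : ℕ :=
  ∑ m ∈ Finset.range (Sg.distTo j i), Sg.d (Sg.succ^[m] j)

/-- The setoid identifying a halfedge with its partner under `τ`; its quotient is the set
of edges. -/
def edgeSetoid : Setoid Sg.H where
  r i j := j = i ∨ j = Sg.τ i
  iseqv := by
    refine ⟨fun i => Or.inl rfl, ?_, ?_⟩
    · rintro i j (rfl | rfl)
      · exact Or.inl rfl
      · exact Or.inr (Sg.τ_invol i).symm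
    · rintro i j k (rfl | rfl) h
      · exact h
      · rcases h with rfl | rfl
        · exact Or.inr rfl
        · exact Or.inl (Sg.τ_invol i)

/-- The edges of the S-graph: `τ`-orbits of halfedges. -/
def Edge : Type := Quotient Sg.edgeSetoid

noncomputable instance : Fintype Sg.Edge := by
  classical
  have : Finite Sg.Edge :=
    Finite.of_surjective (Quotient.mk Sg.edgeSetoid) fun q => Quot.exists_rep q
  exact Fintype.ofFinite _

/-- The edge containing a halfedge. -/
def edgeOf (i : Sg.H) : Sg.Edge := Quotient.mk Sg.edgeSetoid i

/-- An orientation of an S-graph compatible with the grading data: a map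
`ε : H → ℤ/2` with `ε(τ i) ≠ ε(i)` and `d(i,i+1) ≡ ε(i) + ε(i+1) (mod 2)` for all `i`. -/
def Orientable : Prop :=
  ∃ ε : Sg.H → ZMod 2, (∀ i, ε (Sg.τ i) ≠ ε i) ∧
    ∀ i, (Sg.d i : ZMod 2) = ε i + ε (Sg.succ i)

end SGraph

namespace SGraph

/-- The free `k`-algebra on the generators of the quiver presenting the graded Brauer
graph algebra: one idempotent generator for each edge (quiver vertex) and one arrow
generator `a_i` for each halfedge `i`. -/
abbrev FA (k : Type) [Field k] (Sg : SGraph) : Type := FreeAlgebra k (Sg.Edge ⊕ Sg.H)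

/-- The idempotent generator `e_f` at the quiver vertex given by the edge `f`. -/
noncomputable def gE (k : Type) [Field k] (Sg : SGraph) (f : Sg.Edge) : FA k Sg :=
  FreeAlgebra.ι k (Sum.inl f)

/-- The arrow generator `a_i` for the halfedge `i`, of degree `d(i, i+1)`. -/
noncomputable def gA (k : Type) [Field k] (Sg : SGraph) (i : Sg.H) : FA k Sg :=
  FreeAlgebra.ι k (Sum.inr i)

/-- The cycle `s_i = a_{i-1} ⋯ a_{i+1} a_i` going once around the vertex of `i`,
starting and ending at the edge of `i`. -/
noncomputable def loopOnce (k : Type) [Field k] (Sg : SGraph) (i : Sg.H) : FA k Sg :=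
  ((List.range (Sg.val (Sg.vtx i))).reverse.map fun m => gA k Sg (Sg.succ^[m] i)).prod

/-- The cycle `c_i = (a_{i-1} ⋯ a_{i+1} a_i)^{n / deg v}` based at the edge of `i`,
going `n / deg v` times around the vertex `v` of `i`. -/
noncomputable def cyc (k : Type) [Field k] (Sg : SGraph) (n : ℕ) (i : Sg.H) : FA k Sg :=
  loopOnce k Sg i ^ (n / Sg.deg (Sg.vtx i))

/-- The path `a^r_{i,j} = a_{i-1} ⋯ a_{j+1} a_j (a_{j-1} ⋯ a_{j+1} a_j)^r` from the
edge of `j` to the edge of `i` around their common vertex. -/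
noncomputable def pathElem (k : Type) [Field k] (Sg : SGraph) (j i : Sg.H) (r : ℕ) :
    FA k Sg :=
  ((List.range (Sg.distTo j i)).reverse.map fun m => gA k Sg (Sg.succ^[m] j)).prod *
    loopOnce k Sg j ^ r

/-- The defining relations of the graded Brauer graph algebra `A(Σ,n)`, presented as a
quotient of a free algebra: the quiver-vertex idempotent relations
(`e_f e_g = δ_{fg} e_f`, `∑ e_f = 1`, source/target relations for the arrows), the
monomial relations (i) `a_j a_i = 0` whenever `i+1` and `j` lie on the same edge but
`i+1 ≠ j`, and the cycle relations (ii) `c_i = (−1)^{n−1} c_{τ i}`. -/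
inductive Rel (k : Type) [Field k] (Sg : SGraph) (n : ℕ) : FA k Sg → FA k Sg → Prop
  | orth (f g : Sg.Edge) : f ≠ g → Rel k Sg n (gE k Sg f * gE k Sg g) 0
  | idem (f : Sg.Edge) : Rel k Sg n (gE k Sg f * gE k Sg f) (gE k Sg f)
  | sum_one : Rel k Sg n (∑ f : Sg.Edge, gE k Sg f) 1
  | target (i : Sg.H) :
      Rel k Sg n (gE k Sg (Sg.edgeOf (Sg.succ i)) * gA k Sg i) (gA k Sg i)
  | source (i : Sg.H) :
      Rel k Sg n (gA k Sg i * gE k Sg (Sg.edgeOf i)) (gA k Sg i)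
  | comp_zero (i j : Sg.H) : Sg.edgeOf (Sg.succ i) = Sg.edgeOf j → Sg.succ i ≠ j →
      Rel k Sg n (gA k Sg j * gA k Sg i) 0
  | cycle (i : Sg.H) :
      Rel k Sg n (cyc k Sg n i) (((-1 : k) ^ (n - 1)) • cyc k Sg n (Sg.τ i))

/-- The graded Brauer graph algebra `A(Σ,n)` of an S-graph with only internal vertices:
the quotient of the free algebra on the presenting quiver by the defining relations. -/
abbrev BGA (k : Type) [Field k] (Sg : SGraph) (n : ℕ) : Type := RingQuot (Rel k Sg n)

/-- The quotient map onto the graded Brauer graph algebra. -/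
noncomputable def mkBGA (k : Type) [Field k] (Sg : SGraph) (n : ℕ) :
    FA k Sg →ₐ[k] BGA k Sg n :=
  RingQuot.mkAlgHom k (Rel k Sg n)

/-- The weight of a generator: idempotents have degree `0`, and the arrow `a_i` has
degree `d(i, i+1)`. -/
def wt (Sg : SGraph) : (Sg.Edge ⊕ Sg.H) → ℕ := Sum.elim (fun _ => 0) Sg.d

/-- The degree-`m` homogeneous component of the free algebra: the span of the products
of generators of total weight `m`. -/
noncomputable def FAcomp (k : Type) [Field k] (Sg : SGraph) (m : ℕ) :
    Submodule k (FA k Sg) :=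
  Submodule.span k
    { x | ∃ l : List (Sg.Edge ⊕ Sg.H),
        (l.map (wt Sg)).sum = m ∧ x = (l.map (FreeAlgebra.ι k)).prod }

/-- The degree-`m` homogeneous component `A(Σ,n)^m` of the graded Brauer graph algebra
(the relations being homogeneous, these components form a grading). -/
noncomputable def BGAcomp (k : Type) [Field k] (Sg : SGraph) (n m : ℕ) :
    Submodule k (BGA k Sg n) :=
  (FAcomp k Sg m).map (mkBGA k Sg n).toLinearMap

end SGraph

namespace SGraph

/-- The index set for the path basis elements `a^r_{i,j}` of `A(Σ,n)`: ordered pairs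
`(i, j)` of halfedges at a common vertex `v` together with `0 ≤ r < n / deg v`, excluding
the trivial case `(i, i, 0)`. -/
def PathIdx (Sg : SGraph) (n : ℕ) : Type :=
  { p : Sg.H × Sg.H × ℕ //
      Sg.vtx p.1 = Sg.vtx p.2.1 ∧ p.2.2 < n / Sg.deg (Sg.vtx p.1) ∧
        ¬(p.1 = p.2.1 ∧ p.2.2 = 0) }

/-- The candidate basis of `A(Σ,n)`: the idempotents `e_f`, the paths `a^r_{i,j}`, and
the cycles `c_{i_f}` at a chosen halfedge `i_f = pick f` of each edge `f`. -/
noncomputable def basisFun (k : Type) [Field k] (Sg : SGraph) (n : ℕ)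
    (pick : Sg.Edge → Sg.H) :
    (Sg.Edge ⊕ PathIdx Sg n ⊕ Sg.Edge) → BGA k Sg n
  | Sum.inl f => mkBGA k Sg n (gE k Sg f)
  | Sum.inr (Sum.inl p) => mkBGA k Sg n (pathElem k Sg p.1.2.1 p.1.1 p.1.2.2)
  | Sum.inr (Sum.inr f) => mkBGA k Sg n (cyc k Sg n (pick f))

end SGraph

open SGraph

/-!
STATEMENT 5: Let k be a field, Σ an S-graph all of whose vertices are internal, and n a
positive integer compatible with Σ. Fix for each edge f a halfedge i_f of f. Then the
images in A(Σ,n) of the idempotents e_f, the paths a^r_{i,j} (homogeneous of degree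
d(j,i) + r·deg(v)), and the cycles c_{i_f} (of degree n) form a k-basis of A(Σ,n). In
particular, A(Σ,n) is finite dimensional of dimension ∑_{v} val(v)² · n / deg(v).
-/

/-!
Spanning: modulo the relations, a product of generators is zero, an idempotent `e_f`, or a
path `a_{j+t-1} ⋯ a_{j+1} a_j` running around the vertex of `j`. Writing `T_j = val(v)·n/deg(v)`
for the number of arrows of `c_j`, such a path is a candidate basis element `a^r_{i,j}` when
`0 < t < T_j`, is `±c_{i_f}` when `t = T_j` (by the cycle relation), and vanishes when `t > T_j`
because `a_i c_j = 0`.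

Linear independence: on the vector space with the candidate basis as basis, let `e_f` and `a_i`
act as left multiplication ought to (prolonging a path by one arrow when possible). This
respects the defining relations, so it is a representation of `A(Σ,n)`, and acting on the
vector standing for `1 = ∑ e_f` maps the candidate basis onto the standard basis.
-/

theorem Submodule.span_eq_top_of_ι_mul_mem {R X A : Type*} [CommSemiring R] [Semiring A]
    [Algebra R A] {φ : FreeAlgebra R X →ₐ[R] A} (hφ : Function.Surjective φ) {s : Set A}
    (h1 : 1 ∈ Submodule.span R s)
    (hs : ∀ x, ∀ b ∈ s, φ (FreeAlgebra.ι R x) * b ∈ Submodule.span R s) :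
    Submodule.span R s = ⊤ := by
  refine Submodule.eq_top_iff'.2 fun a => ?_
  obtain ⟨w, rfl⟩ := hφ a
  suffices ∀ c ∈ Submodule.span R s, φ w * c ∈ Submodule.span R s by
    simpa using this 1 h1
  induction w using FreeAlgebra.induction with
  | grade0 r =>
    intro c hc
    rw [AlgHom.commutes, ← Algebra.smul_def]
    exact Submodule.smul_mem _ r hc
  | grade1 x =>
    exact fun c hc => (Submodule.span_le (p := (Submodule.span R s).comap
      (LinearMap.mulLeft R (φ (FreeAlgebra.ι R x))))).2 (hs x) hc
  | mul a b ha hb => exact fun c hc => by rw [map_mul, mul_assoc]; exact ha _ (hb c hc)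
  | add a b ha hb => exact fun c hc => by rw [map_add, add_mul]; exact add_mem (ha c hc) (hb c hc)

namespace SGraph

open Function

section Orbits

variable (Sg : SGraph)

theorem mem_halfedgesAt {v : Sg.V} {i : Sg.H} : i ∈ Sg.halfedgesAt v ↔ Sg.vtx i = v := by
  simp [halfedgesAt]

theorem vtx_iterate (i : Sg.H) (m : ℕ) : Sg.vtx (Sg.succ^[m] i) = Sg.vtx i := by
  induction m with
  | zero => rfl
  | succ m ih => rw [iterate_succ_apply', Sg.vtx_succ, ih]

theorem mem_periodicPts_succ (i : Sg.H) : i ∈ periodicPts Sg.succ := by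
  obtain ⟨m, hm⟩ := Sg.cyclic (Sg.succ i) i (Sg.vtx_succ i)
  exact ⟨m + 1, m.succ_pos, by rwa [IsPeriodicPt, IsFixedPt, iterate_succ_apply]⟩

theorem image_iterate_range_minimalPeriod (i : Sg.H) :
    (Finset.range (minimalPeriod Sg.succ i)).image (Sg.succ^[·] i) =
      Sg.halfedgesAt (Sg.vtx i) := by
  ext j
  simp only [Finset.mem_image, Finset.mem_range, mem_halfedgesAt]
  constructor
  · rintro ⟨m, -, rfl⟩
    exact Sg.vtx_iterate i m
  · intro hj
    obtain ⟨m, rfl⟩ := Sg.cyclic i j hj.symm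
    exact ⟨m % minimalPeriod Sg.succ i,
      Nat.mod_lt _ (minimalPeriod_pos_of_mem_periodicPts (Sg.mem_periodicPts_succ i)),
      iterate_mod_minimalPeriod_eq⟩

theorem minimalPeriod_succ (i : Sg.H) : minimalPeriod Sg.succ i = Sg.val (Sg.vtx i) := by
  rw [val, ← Sg.image_iterate_range_minimalPeriod, Finset.card_image_of_injOn
    (by rw [Finset.coe_range]; exact iterate_injOn_Iio_minimalPeriod), Finset.card_range]

theorem injOn_iterate_succ (i : Sg.H) :
    Set.InjOn (Sg.succ^[·] i) (Set.Iio (Sg.val (Sg.vtx i))) := by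
  rw [← Sg.minimalPeriod_succ]
  exact iterate_injOn_Iio_minimalPeriod

theorem val_pos (i : Sg.H) : 0 < Sg.val (Sg.vtx i) :=
  Finset.card_pos.2 ⟨i, Sg.mem_halfedgesAt.2 rfl⟩

theorem iterate_mod_val (i : Sg.H) (m : ℕ) :
    Sg.succ^[m % Sg.val (Sg.vtx i)] i = Sg.succ^[m] i := by
  rw [← Sg.minimalPeriod_succ]
  exact iterate_mod_minimalPeriod_eq

theorem iterate_mul_val (i : Sg.H) (r : ℕ) : Sg.succ^[r * Sg.val (Sg.vtx i)] i = i := by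
  rw [← Sg.iterate_mod_val, Nat.mul_mod_left, iterate_zero_apply]

theorem iterate_distTo {i j : Sg.H} (h : Sg.vtx i = Sg.vtx j) :
    Sg.succ^[Sg.distTo j i] j = i := by
  have hex := Sg.cyclic j i h.symm
  rw [distTo, dif_pos hex]
  exact Nat.find_spec hex

theorem distTo_iterate (j : Sg.H) {m : ℕ} (hm : m < Sg.val (Sg.vtx j)) :
    Sg.distTo j (Sg.succ^[m] j) = m := by
  have hex : ∃ m', Sg.succ^[m'] j = Sg.succ^[m] j := ⟨m, rfl⟩
  rw [distTo, dif_pos hex]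
  exact Sg.injOn_iterate_succ j ((Nat.find_min' hex rfl).trans_lt hm) hm (Nat.find_spec hex)

theorem distTo_self (j : Sg.H) : Sg.distTo j j = 0 :=
  Sg.distTo_iterate j (m := 0) (Sg.val_pos j)

theorem distTo_lt_val {i j : Sg.H} (h : Sg.vtx i = Sg.vtx j) :
    Sg.distTo j i < Sg.val (Sg.vtx j) := by
  obtain ⟨m, rfl⟩ := Sg.cyclic j i h.symm
  rw [← Sg.iterate_mod_val, Sg.distTo_iterate j (Nat.mod_lt _ (Sg.val_pos j))]
  exact Nat.mod_lt _ (Sg.val_pos j)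

theorem sum_range_val_d (j : Sg.H) :
    ∑ s ∈ Finset.range (Sg.val (Sg.vtx j)), Sg.d (Sg.succ^[s] j) = Sg.deg (Sg.vtx j) := by
  rw [deg, ← Sg.image_iterate_range_minimalPeriod, Finset.sum_image
    (by rw [Finset.coe_range, Sg.minimalPeriod_succ]; exact Sg.injOn_iterate_succ j),
    Sg.minimalPeriod_succ]

theorem edgeOf_τ (i : Sg.H) : Sg.edgeOf (Sg.τ i) = Sg.edgeOf i :=
  Quotient.sound (Or.inr (Sg.τ_invol i).symm)

theorem edgeOf_eq_edgeOf_iff {i j : Sg.H} : Sg.edgeOf i = Sg.edgeOf j ↔ i = j ∨ i = Sg.τ j := by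
  refine ⟨fun h => ?_, ?_⟩
  · rcases Quotient.exact h with h | h
    · exact Or.inl h.symm
    · exact Or.inr (by rw [h, Sg.τ_invol])
  · rintro (rfl | rfl)
    exacts [rfl, Sg.edgeOf_τ j]

theorem card_H_eq_two_mul_card_edge : Fintype.card Sg.H = 2 * Fintype.card Sg.Edge := by
  classical
  have hfiber (f : Sg.Edge) : (Finset.univ.filter fun j => Sg.edgeOf j = f).card = 2 := by
    obtain ⟨i, rfl⟩ : ∃ i, Sg.edgeOf i = f := Quotient.exists_rep f
    have : Finset.univ.filter (fun j => Sg.edgeOf j = Sg.edgeOf i) = {i, Sg.τ i} := by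
      ext j
      simp [edgeOf_eq_edgeOf_iff]
    rw [this, Finset.card_pair (Sg.τ_ne i).symm]
  rw [← Finset.card_univ, Finset.card_eq_sum_card_fiberwise (f := Sg.edgeOf) (t := Finset.univ)
    fun _ _ => Finset.mem_univ _, Finset.sum_congr rfl fun f _ => hfiber f, Finset.sum_const,
    Finset.card_univ, smul_eq_mul, mul_comm]

end Orbits

section Words

variable (k : Type) [Field k] (Sg : SGraph)

noncomputable def pathWord (j : Sg.H) (t : ℕ) : FA k Sg :=
  ((List.range t).reverse.map fun m => gA k Sg (Sg.succ^[m] j)).prod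

theorem pathWord_zero (j : Sg.H) : pathWord k Sg j 0 = 1 := rfl

theorem pathWord_succ (j : Sg.H) (t : ℕ) :
    pathWord k Sg j (t + 1) = gA k Sg (Sg.succ^[t] j) * pathWord k Sg j t := by
  rw [pathWord, List.range_succ, List.reverse_append]
  rfl

theorem pathWord_one (j : Sg.H) : pathWord k Sg j 1 = gA k Sg j := by
  rw [pathWord_succ, pathWord_zero, mul_one, iterate_zero_apply]

theorem pathWord_add (j : Sg.H) (a b : ℕ) :
    pathWord k Sg j (a + b) = pathWord k Sg (Sg.succ^[a] j) b * pathWord k Sg j a := by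
  induction b with
  | zero => rw [pathWord_zero, one_mul, Nat.add_zero]
  | succ b ih =>
    rw [← Nat.add_assoc, pathWord_succ, ih, pathWord_succ, mul_assoc, ← iterate_add_apply,
      Nat.add_comm b a]

theorem loopOnce_pow (j : Sg.H) (r : ℕ) :
    loopOnce k Sg j ^ r = pathWord k Sg j (r * Sg.val (Sg.vtx j)) := by
  induction r with
  | zero => rw [pow_zero, Nat.zero_mul, pathWord_zero]
  | succ r ih =>
    rw [pow_succ', ih, Nat.succ_mul, pathWord_add, Sg.iterate_mul_val]
    rfl

theorem pathElem_eq_pathWord (j i : Sg.H) (r : ℕ) :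
    pathElem k Sg j i r = pathWord k Sg j (Sg.distTo j i + r * Sg.val (Sg.vtx j)) := by
  rw [pathElem, loopOnce_pow, Nat.add_comm, pathWord_add, Sg.iterate_mul_val]
  rfl

def pathDeg (j : Sg.H) (t : ℕ) : ℕ := ∑ s ∈ Finset.range t, Sg.d (Sg.succ^[s] j)

theorem pathWord_mem_FAcomp (j : Sg.H) (t : ℕ) :
    pathWord k Sg j t ∈ FAcomp k Sg (Sg.pathDeg j t) := by
  refine Submodule.subset_span ⟨(List.range t).reverse.map (Sum.inr <| Sg.succ^[·] j), ?_, ?_⟩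
  · rw [List.map_map, List.map_reverse, List.sum_reverse]
    rfl
  · rw [List.map_map]
    rfl

theorem pathDeg_add_mul_val (j : Sg.H) (a r : ℕ) :
    Sg.pathDeg j (a + r * Sg.val (Sg.vtx j)) = Sg.pathDeg j a + r * Sg.deg (Sg.vtx j) := by
  induction r with
  | zero => simp
  | succ r ih =>
    rw [Nat.succ_mul, ← Nat.add_assoc, pathDeg, Finset.sum_range_add, ← pathDeg, ih,
      ← Sg.vtx_iterate j (a + r * Sg.val (Sg.vtx j)), ← Sg.sum_range_val_d, Sg.vtx_iterate]
    simp only [← iterate_add_apply, Nat.add_comm _ (a + _)]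
    ring

theorem pathElem_mem_FAcomp {i j : Sg.H} (h : Sg.vtx i = Sg.vtx j) (r : ℕ) :
    pathElem k Sg j i r ∈ FAcomp k Sg (Sg.dTo j i + r * Sg.deg (Sg.vtx i)) := by
  rw [pathElem_eq_pathWord, h, dTo, ← pathDeg, ← pathDeg_add_mul_val]
  exact pathWord_mem_FAcomp k Sg j _

/-- The number of arrows of the cycle `c_j`. -/
def cycLength (n : ℕ) (j : Sg.H) : ℕ := n / Sg.deg (Sg.vtx j) * Sg.val (Sg.vtx j)

theorem cyc_eq_pathWord (n : ℕ) (j : Sg.H) : cyc k Sg n j = pathWord k Sg j (Sg.cycLength n j) :=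
  loopOnce_pow k Sg j _

theorem cyc_mem_FAcomp {n : ℕ} (hcompat : ∀ v, Sg.deg v ∣ n) (j : Sg.H) :
    cyc k Sg n j ∈ FAcomp k Sg n := by
  rw [cyc_eq_pathWord]
  have := pathWord_mem_FAcomp k Sg j (0 + Sg.cycLength n j)
  rwa [cycLength, pathDeg_add_mul_val, Nat.div_mul_cancel (hcompat _), pathDeg,
    Finset.sum_range_zero, Nat.zero_add, Nat.zero_add] at this

end Words

theorem cycLength_pos (Sg : SGraph) {n : ℕ} (hn : 0 < n) (hcompat : ∀ v, Sg.deg v ∣ n)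
    (j : Sg.H) : 0 < Sg.cycLength n j := by
  have hdeg : 0 < Sg.deg (Sg.vtx j) :=
    Finset.sum_pos (fun i _ => Sg.d_pos i) ⟨j, Sg.mem_halfedgesAt.2 rfl⟩
  exact Nat.mul_pos (Nat.div_pos (Nat.le_of_dvd hn (hcompat _)) hdeg) (Sg.val_pos j)

theorem cycLength_iterate (Sg : SGraph) (n : ℕ) (j : Sg.H) (m : ℕ) :
    Sg.cycLength n (Sg.succ^[m] j) = Sg.cycLength n j := by
  rw [cycLength, cycLength, Sg.vtx_iterate]

theorem iterate_cycLength (Sg : SGraph) (n : ℕ) (j : Sg.H) :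
    Sg.succ^[Sg.cycLength n j] j = j :=
  Sg.iterate_mul_val j _

namespace PathIdx

variable {Sg : SGraph} {n : ℕ}

/- For `p = (i, j, r)`, indexing the path `a^r_{i,j}`: `p.tgt = i`, `p.src = j`, `p.turns = r`. -/
def src (p : PathIdx Sg n) : Sg.H := p.1.2.1

def tgt (p : PathIdx Sg n) : Sg.H := p.1.1

def turns (p : PathIdx Sg n) : ℕ := p.1.2.2

theorem vtx_tgt (p : PathIdx Sg n) : Sg.vtx p.tgt = Sg.vtx p.src := p.2.1

noncomputable def length (p : PathIdx Sg n) : ℕ :=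
  Sg.distTo p.src p.tgt + p.turns * Sg.val (Sg.vtx p.src)

theorem length_pos (p : PathIdx Sg n) : 0 < p.length := by
  refine Nat.pos_of_ne_zero fun h => ?_
  rw [length, Nat.add_eq_zero_iff, Nat.mul_eq_zero] at h
  obtain ⟨hd, hr | hv⟩ := h
  · refine p.2.2.2 ⟨?_, hr⟩
    change p.tgt = p.src
    rw [← Sg.iterate_distTo p.vtx_tgt, hd, iterate_zero_apply]
  · exact (Sg.val_pos p.src).ne' hv

theorem length_lt_cycLength (p : PathIdx Sg n) : p.length < Sg.cycLength n p.src := by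
  have h1 := Sg.distTo_lt_val p.vtx_tgt
  have h2 : p.turns + 1 ≤ n / Sg.deg (Sg.vtx p.src) := by
    have := p.2.2.1
    rwa [p.2.1] at this
  calc p.length < (p.turns + 1) * Sg.val (Sg.vtx p.src) := by unfold length; linarith
    _ ≤ Sg.cycLength n p.src := Nat.mul_le_mul_right _ h2

def ofLength (j : Sg.H) (t : ℕ) (h0 : 0 < t) (hT : t < Sg.cycLength n j) : PathIdx Sg n :=
  ⟨(Sg.succ^[t % Sg.val (Sg.vtx j)] j, j, t / Sg.val (Sg.vtx j)), Sg.vtx_iterate j _,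
    by rw [Sg.vtx_iterate]; exact (Nat.div_lt_iff_lt_mul (Sg.val_pos j)).2 hT,
    fun ⟨hj, hr⟩ => by
      simp only at hj hr
      have hmod := Sg.distTo_iterate j (Nat.mod_lt t (Sg.val_pos j))
      rw [hj, Sg.distTo_self] at hmod
      have := Nat.div_add_mod t (Sg.val (Sg.vtx j))
      rw [hr, ← hmod] at this
      omega⟩

theorem src_ofLength (j : Sg.H) (t : ℕ) (h0 : 0 < t) (hT : t < Sg.cycLength n j) :
    (ofLength j t h0 hT).src = j := rfl

theorem tgt_ofLength (j : Sg.H) (t : ℕ) (h0 : 0 < t) (hT : t < Sg.cycLength n j) :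
    (ofLength j t h0 hT).tgt = Sg.succ^[t] j :=
  Sg.iterate_mod_val j t

theorem length_ofLength (j : Sg.H) (t : ℕ) (h0 : 0 < t) (hT : t < Sg.cycLength n j) :
    (ofLength j t h0 hT).length = t := by
  rw [length, src_ofLength, tgt_ofLength, ← Sg.iterate_mod_val,
    Sg.distTo_iterate j (Nat.mod_lt t (Sg.val_pos j))]
  exact Nat.mod_add_div' t _

theorem ofLength_length (p : PathIdx Sg n) :
    ofLength p.src p.length p.length_pos p.length_lt_cycLength = p := by
  have hd := Sg.distTo_lt_val p.vtx_tgt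
  have hval := Sg.val_pos p.src
  refine Subtype.ext (Prod.ext ?_ (Prod.ext rfl ?_))
  · change Sg.succ^[p.length % _] p.src = p.tgt
    rw [length, Nat.add_mul_mod_self_right, Nat.mod_eq_of_lt hd, Sg.iterate_distTo p.vtx_tgt]
  · change p.length / _ = p.turns
    rw [length, Nat.add_mul_div_right _ _ hval, Nat.div_eq_of_lt hd, Nat.zero_add]

noncomputable def equivSigma : PathIdx Sg n ≃ Σ j : Sg.H, Set.Ioo 0 (Sg.cycLength n j) where
  toFun p := ⟨p.src, p.length, p.length_pos, p.length_lt_cycLength⟩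
  invFun q := ofLength q.1 q.2 q.2.2.1 q.2.2.2
  left_inv := ofLength_length
  right_inv _ := Sigma.subtype_ext rfl (length_ofLength _ _ _ _)

noncomputable instance : Fintype (PathIdx Sg n) := Fintype.ofEquiv _ equivSigma.symm

end PathIdx

theorem card_pathIdx_add_card_H (Sg : SGraph) {n : ℕ} (hT : ∀ j, 0 < Sg.cycLength n j) :
    Fintype.card (PathIdx Sg n) + Fintype.card Sg.H = ∑ j, Sg.cycLength n j := by
  rw [Fintype.card_congr PathIdx.equivSigma, Fintype.card_sigma, Fintype.card_eq_sum_ones,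
    ← Finset.sum_add_distrib]
  refine Finset.sum_congr rfl fun j _ => ?_
  have := hT j
  rw [Fintype.card_Ioo, Nat.card_Ioo]
  omega

theorem sum_cycLength (Sg : SGraph) (n : ℕ) :
    ∑ j, Sg.cycLength n j = ∑ v, Sg.val v ^ 2 * (n / Sg.deg v) := by
  rw [← Finset.sum_fiberwise_of_maps_to (g := Sg.vtx) (t := Finset.univ)
    fun _ _ => Finset.mem_univ _]
  refine Finset.sum_congr rfl fun v _ => ?_
  rw [Finset.sum_const_nat (m := n / Sg.deg v * Sg.val v) fun j hj => by
    rw [cycLength, (Finset.mem_filter.1 hj).2]]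
  change Sg.val v * _ = _
  ring

theorem card_basisIdx (Sg : SGraph) {n : ℕ} (hT : ∀ j, 0 < Sg.cycLength n j) :
    Fintype.card (Sg.Edge ⊕ PathIdx Sg n ⊕ Sg.Edge) = ∑ v, Sg.val v ^ 2 * (n / Sg.deg v) := by
  rw [Fintype.card_sum, Fintype.card_sum, ← sum_cycLength, ← card_pathIdx_add_card_H Sg hT,
    card_H_eq_two_mul_card_edge]
  ring

/-- The vector space with basis the candidate basis of `A(Σ,n)`; it carries a
representation of `A(Σ,n)` imitating the left regular one. -/
abbrev Model (k : Type) [Field k] (Sg : SGraph) (n : ℕ) : Type :=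
  (Sg.Edge ⊕ PathIdx Sg n ⊕ Sg.Edge) →₀ k

namespace Model

open Finsupp
open scoped Classical

section Defs

variable (k : Type) [Field k] {Sg : SGraph} (n : ℕ) (pick : Sg.Edge → Sg.H)

/-- The scalar with `c_j = cycSign j • c_{i_f}` in `A(Σ,n)`, where `f` is the edge of `j`. -/
noncomputable def cycSign (j : Sg.H) : k := if pick (Sg.edgeOf j) = j then 1 else (-1) ^ (n - 1)

/-- The vector standing for the path of `t` arrows starting at `j` (zero once it is longer
than `c_j`). -/
noncomputable def path (j : Sg.H) (t : ℕ) : Model k Sg n :=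
  if h0 : t = 0 then single (.inl (Sg.edgeOf j)) 1
  else if hT : t < Sg.cycLength n j then
    single (.inr (.inl (PathIdx.ofLength j t (Nat.pos_of_ne_zero h0) hT))) 1
  else if t = Sg.cycLength n j then cycSign k n pick j • single (.inr (.inr (Sg.edgeOf j))) 1
  else 0

def tgtEdge : (Sg.Edge ⊕ PathIdx Sg n ⊕ Sg.Edge) → Sg.Edge
  | .inl f => f
  | .inr (.inl p) => Sg.edgeOf p.tgt
  | .inr (.inr f) => f

noncomputable def idemOp (f : Sg.Edge) : Module.End k (Model k Sg n) :=
  linearCombination k fun b => if tgtEdge n b = f then single b 1 else 0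

noncomputable def arrowOnBasis (i : Sg.H) : (Sg.Edge ⊕ PathIdx Sg n ⊕ Sg.Edge) → Model k Sg n
  | .inl f => if Sg.edgeOf i = f then path k n pick i 1 else 0
  | .inr (.inl p) => if p.tgt = i then path k n pick p.src (p.length + 1) else 0
  | .inr (.inr _) => 0

noncomputable def arrowOp (i : Sg.H) : Module.End k (Model k Sg n) :=
  linearCombination k (arrowOnBasis k n pick i)

noncomputable def freeRep : FA k Sg →ₐ[k] Module.End k (Model k Sg n) :=
  FreeAlgebra.lift k (Sum.elim (idemOp k n) (arrowOp k n pick))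

end Defs

variable {k : Type} [Field k] {Sg : SGraph} {n : ℕ} {pick : Sg.Edge → Sg.H}

theorem path_zero (j : Sg.H) : path k n pick j 0 = single (.inl (Sg.edgeOf j)) 1 := by
  rw [path, dif_pos rfl]

theorem path_of_lt {j : Sg.H} {t : ℕ} (h0 : 0 < t) (hT : t < Sg.cycLength n j) :
    path k n pick j t = single (.inr (.inl (PathIdx.ofLength j t h0 hT))) 1 := by
  rw [path, dif_neg h0.ne', dif_pos hT]

theorem path_cycLength {j : Sg.H} (hT : 0 < Sg.cycLength n j) :
    path k n pick j (Sg.cycLength n j) =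
      cycSign k n pick j • single (.inr (.inr (Sg.edgeOf j))) 1 := by
  rw [path, dif_neg hT.ne', dif_neg (lt_irrefl _), if_pos rfl]

theorem path_of_gt {j : Sg.H} {t : ℕ} (h : Sg.cycLength n j < t) : path k n pick j t = 0 := by
  rw [path, dif_neg (by omega), dif_neg (by omega), if_neg (by omega)]

theorem path_length (p : PathIdx Sg n) :
    path k n pick p.src p.length = single (.inr (.inl p)) 1 := by
  rw [path_of_lt p.length_pos p.length_lt_cycLength, PathIdx.ofLength_length]

theorem path_eq_single_cyc (hpick : ∀ f, Sg.edgeOf (pick f) = f)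
    (hT : ∀ j, 0 < Sg.cycLength n j) (f : Sg.Edge) :
    path k n pick (pick f) (Sg.cycLength n (pick f)) = single (.inr (.inr f)) 1 := by
  rw [path_cycLength (hT _), cycSign, hpick, if_pos rfl, one_smul]

theorem path_cycLength_τ (hpick : ∀ f, Sg.edgeOf (pick f) = f)
    (hT : ∀ j, 0 < Sg.cycLength n j) (i : Sg.H) :
    path k n pick i (Sg.cycLength n i) =
      (-1 : k) ^ (n - 1) • path k n pick (Sg.τ i) (Sg.cycLength n (Sg.τ i)) := by
  rw [path_cycLength (hT _), path_cycLength (hT _), Sg.edgeOf_τ, smul_smul, cycSign, cycSign,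
    Sg.edgeOf_τ]
  rcases Sg.edgeOf_eq_edgeOf_iff.1 (hpick (Sg.edgeOf i)) with h | h
  · rw [if_pos h, if_neg (by rw [h]; exact (Sg.τ_ne i).symm), ← pow_add,
      Even.neg_one_pow ⟨_, rfl⟩]
  · rw [if_neg (by rw [h]; exact Sg.τ_ne i), if_pos h, mul_one]

theorem ext_path (hpick : ∀ f, Sg.edgeOf (pick f) = f) (hT : ∀ j, 0 < Sg.cycLength n j)
    {φ ψ : Module.End k (Model k Sg n)}
    (h : ∀ j t, φ (path k n pick j t) = ψ (path k n pick j t)) : φ = ψ := by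
  refine Finsupp.basisSingleOne.ext fun b => ?_
  change φ (single b 1) = ψ (single b 1)
  rcases b with f | p | f
  · rw [← hpick f, ← path_zero]
    exact h _ _
  · rw [← path_length]
    exact h _ _
  · rw [← path_eq_single_cyc hpick hT]
    exact h _ _

theorem idemOp_single (f : Sg.Edge) (b : Sg.Edge ⊕ PathIdx Sg n ⊕ Sg.Edge) :
    idemOp k n f (single b 1) = if tgtEdge n b = f then single b 1 else 0 := by
  rw [idemOp, linearCombination_single, one_smul]

theorem arrowOp_single (i : Sg.H) (b : Sg.Edge ⊕ PathIdx Sg n ⊕ Sg.Edge) :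
    arrowOp k n pick i (single b 1) = arrowOnBasis k n pick i b := by
  rw [arrowOp, linearCombination_single, one_smul]

theorem idemOp_path (f : Sg.Edge) (j : Sg.H) (t : ℕ) :
    idemOp k n f (path k n pick j t) =
      if Sg.edgeOf (Sg.succ^[t] j) = f then path k n pick j t else 0 := by
  rcases Nat.eq_zero_or_pos t with rfl | h0
  · rw [path_zero, idemOp_single]
    rfl
  rcases lt_trichotomy t (Sg.cycLength n j) with hT | rfl | hT
  · rw [path_of_lt h0 hT, idemOp_single, tgtEdge, PathIdx.tgt_ofLength]
  · rw [path_cycLength h0, map_smul, idemOp_single, tgtEdge, Sg.iterate_cycLength, smul_ite,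
      smul_zero]
  · rw [path_of_gt hT, map_zero, ite_self]

theorem arrowOp_path_zero (i j : Sg.H) :
    arrowOp k n pick i (path k n pick j 0) =
      if Sg.edgeOf i = Sg.edgeOf j then path k n pick i 1 else 0 := by
  rw [path_zero, arrowOp_single, arrowOnBasis]

theorem arrowOp_path_of_pos (i j : Sg.H) {t : ℕ} (h0 : 0 < t) :
    arrowOp k n pick i (path k n pick j t) =
      if Sg.succ^[t] j = i then path k n pick j (t + 1) else 0 := by
  rcases lt_trichotomy t (Sg.cycLength n j) with hT | rfl | hT
  · rw [path_of_lt h0 hT, arrowOp_single, arrowOnBasis, PathIdx.tgt_ofLength,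
      PathIdx.src_ofLength, PathIdx.length_ofLength]
  · rw [path_cycLength h0, map_smul, arrowOp_single, arrowOnBasis, smul_zero,
      path_of_gt (Nat.lt_succ_self _), ite_self]
  · rw [path_of_gt hT, map_zero, path_of_gt (by omega), ite_self]

theorem arrowOp_path_self (j : Sg.H) (t : ℕ) :
    arrowOp k n pick (Sg.succ^[t] j) (path k n pick j t) = path k n pick j (t + 1) := by
  rcases Nat.eq_zero_or_pos t with rfl | h0
  · rw [arrowOp_path_zero, iterate_zero_apply, if_pos rfl]
  · rw [arrowOp_path_of_pos _ _ h0, if_pos rfl]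

theorem freeRep_gE (f : Sg.Edge) : freeRep k n pick (gE k Sg f) = idemOp k n f :=
  FreeAlgebra.lift_ι_apply _ _

theorem freeRep_gA (i : Sg.H) : freeRep k n pick (gA k Sg i) = arrowOp k n pick i :=
  FreeAlgebra.lift_ι_apply _ _

theorem freeRep_pathWord_path_self (j : Sg.H) (t m : ℕ) :
    freeRep k n pick (pathWord k Sg (Sg.succ^[t] j) m) (path k n pick j t) =
      path k n pick j (t + m) := by
  induction m with
  | zero => rw [pathWord_zero, map_one, Module.End.one_apply, Nat.add_zero]
  | succ m ih =>
    rw [pathWord_succ, map_mul, Module.End.mul_apply, ih, freeRep_gA, ← iterate_add_apply,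
      Nat.add_comm m t, arrowOp_path_self, Nat.add_assoc]

theorem freeRep_pathWord_eq_zero {j : Sg.H} {m : ℕ} (hm : 0 < m) {v : Model k Sg n}
    (hv : arrowOp k n pick j v = 0) : freeRep k n pick (pathWord k Sg j m) v = 0 := by
  obtain ⟨m, rfl⟩ := Nat.exists_eq_add_of_lt hm
  rw [Nat.zero_add, Nat.add_comm, pathWord_add, pathWord_one, map_mul, Module.End.mul_apply,
    freeRep_gA, hv, map_zero]

theorem freeRep_cyc_path_zero (hT : ∀ j, 0 < Sg.cycLength n j) (i j : Sg.H) :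
    freeRep k n pick (cyc k Sg n i) (path k n pick j 0) =
      if Sg.edgeOf i = Sg.edgeOf j then path k n pick i (Sg.cycLength n i) else 0 := by
  rw [cyc_eq_pathWord]
  split_ifs with h
  · rw [path_zero, ← h, ← path_zero]
    exact freeRep_pathWord_path_self i 0 _ |>.trans (by rw [Nat.zero_add])
  · exact freeRep_pathWord_eq_zero (hT i) (by rw [arrowOp_path_zero, if_neg h])

theorem freeRep_cyc_path_of_pos (hT : ∀ j, 0 < Sg.cycLength n j) (i j : Sg.H) {t : ℕ}
    (h0 : 0 < t) : freeRep k n pick (cyc k Sg n i) (path k n pick j t) = 0 := by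
  rw [cyc_eq_pathWord]
  by_cases h : Sg.succ^[t] j = i
  · subst h
    rw [freeRep_pathWord_path_self, path_of_gt (by rw [Sg.cycLength_iterate]; omega)]
  · exact freeRep_pathWord_eq_zero (hT i) (by rw [arrowOp_path_of_pos _ _ h0, if_neg h])

theorem idemOp_arrowOp_path (i j : Sg.H) (t : ℕ) :
    idemOp k n (Sg.edgeOf (Sg.succ i)) (arrowOp k n pick i (path k n pick j t)) =
      arrowOp k n pick i (path k n pick j t) := by
  rcases Nat.eq_zero_or_pos t with rfl | h0
  · rw [arrowOp_path_zero]
    split_ifs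
    · rw [idemOp_path, iterate_one, if_pos rfl]
    · rw [map_zero]
  · rw [arrowOp_path_of_pos _ _ h0]
    split_ifs with h
    · rw [idemOp_path, iterate_succ_apply', h, if_pos rfl]
    · rw [map_zero]

theorem arrowOp_idemOp_path (i j : Sg.H) (t : ℕ) :
    arrowOp k n pick i (idemOp k n (Sg.edgeOf i) (path k n pick j t)) =
      arrowOp k n pick i (path k n pick j t) := by
  rw [idemOp_path]
  split_ifs with h
  · rfl
  rw [map_zero]
  rcases Nat.eq_zero_or_pos t with rfl | h0
  · rw [arrowOp_path_zero, if_neg fun h' => h h'.symm]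
  · rw [arrowOp_path_of_pos _ _ h0, if_neg fun h' => h (congrArg Sg.edgeOf h')]

theorem arrowOp_arrowOp_path_of_ne {i i' : Sg.H} (hne : Sg.succ i ≠ i') (j : Sg.H) (t : ℕ) :
    arrowOp k n pick i' (arrowOp k n pick i (path k n pick j t)) = 0 := by
  rcases Nat.eq_zero_or_pos t with rfl | h0
  · rw [arrowOp_path_zero]
    split_ifs
    · rw [arrowOp_path_of_pos _ _ one_pos, iterate_one, if_neg hne]
    · rw [map_zero]
  · rw [arrowOp_path_of_pos _ _ h0]
    split_ifs with h
    · rw [arrowOp_path_of_pos _ _ (Nat.succ_pos t), iterate_succ_apply', h, if_neg hne]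
    · rw [map_zero]

theorem freeRep_cyc_path_eq_smul (hpick : ∀ f, Sg.edgeOf (pick f) = f)
    (hT : ∀ j, 0 < Sg.cycLength n j) (i j : Sg.H) (t : ℕ) :
    freeRep k n pick (cyc k Sg n i) (path k n pick j t) =
      (-1 : k) ^ (n - 1) • freeRep k n pick (cyc k Sg n (Sg.τ i)) (path k n pick j t) := by
  rcases Nat.eq_zero_or_pos t with rfl | h0
  · rw [freeRep_cyc_path_zero hT, freeRep_cyc_path_zero hT, Sg.edgeOf_τ]
    split_ifs
    · exact path_cycLength_τ hpick hT i
    · rw [smul_zero]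
  · rw [freeRep_cyc_path_of_pos hT _ _ h0, freeRep_cyc_path_of_pos hT _ _ h0, smul_zero]

theorem freeRep_rel (hpick : ∀ f, Sg.edgeOf (pick f) = f) (hT : ∀ j, 0 < Sg.cycLength n j)
    ⦃x y : FA k Sg⦄ (h : Rel k Sg n x y) : freeRep k n pick x = freeRep k n pick y := by
  refine ext_path hpick hT fun j t => ?_
  induction h with
  | orth f g hfg =>
    rw [map_mul, map_zero, Module.End.mul_apply, freeRep_gE, freeRep_gE, idemOp_path,
      LinearMap.zero_apply]
    split_ifs with hg
    · rw [idemOp_path, if_neg (hg ▸ hfg.symm)]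
    · rw [map_zero]
  | idem f =>
    rw [map_mul, Module.End.mul_apply, freeRep_gE, idemOp_path]
    split_ifs with hf
    · rw [idemOp_path, if_pos hf]
    · rw [map_zero]
  | sum_one =>
    simp only [map_sum, map_one, LinearMap.sum_apply, freeRep_gE, idemOp_path,
      Finset.sum_ite_eq, Finset.mem_univ, if_true, Module.End.one_apply]
  | target i =>
    rw [map_mul, Module.End.mul_apply, freeRep_gE, freeRep_gA, idemOp_arrowOp_path]
  | source i =>
    rw [map_mul, Module.End.mul_apply, freeRep_gE, freeRep_gA, arrowOp_idemOp_path]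
  | comp_zero i i' _ hne =>
    rw [map_mul, map_zero, Module.End.mul_apply, freeRep_gA, freeRep_gA,
      arrowOp_arrowOp_path_of_ne hne, LinearMap.zero_apply]
  | cycle i =>
    rw [map_smul, LinearMap.smul_apply, freeRep_cyc_path_eq_smul hpick hT]

variable (k n pick) in
noncomputable def rep (hpick : ∀ f, Sg.edgeOf (pick f) = f) (hT : ∀ j, 0 < Sg.cycLength n j) :
    BGA k Sg n →ₐ[k] Module.End k (Model k Sg n) :=
  RingQuot.liftAlgHom k ⟨freeRep k n pick, freeRep_rel hpick hT⟩

theorem rep_mk (hpick : ∀ f, Sg.edgeOf (pick f) = f) (hT : ∀ j, 0 < Sg.cycLength n j)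
    (x : FA k Sg) : rep k n pick hpick hT (mkBGA k Sg n x) = freeRep k n pick x :=
  RingQuot.liftAlgHom_mkAlgHom_apply _ _ _ _

variable (k n) in
/-- The vector playing the role of `1 = ∑ e_f`. -/
noncomputable def unit : Model k Sg n := ∑ f : Sg.Edge, single (.inl f) 1

theorem freeRep_pathWord_unit (j : Sg.H) {t : ℕ} (h0 : 0 < t) :
    freeRep k n pick (pathWord k Sg j t) (unit k n) = path k n pick j t := by
  rw [unit, map_sum, Finset.sum_eq_single (Sg.edgeOf j)]
  · rw [← path_zero (pick := pick)]
    exact freeRep_pathWord_path_self j 0 t |>.trans (by rw [Nat.zero_add])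
  · intro f _ hf
    refine freeRep_pathWord_eq_zero h0 ?_
    rw [arrowOp_single, arrowOnBasis, if_neg fun h => hf h.symm]
  · exact fun h => absurd (Finset.mem_univ _) h

variable (k n pick) in
noncomputable def evalUnit (hpick : ∀ f, Sg.edgeOf (pick f) = f)
    (hT : ∀ j, 0 < Sg.cycLength n j) : BGA k Sg n →ₗ[k] Model k Sg n :=
  LinearMap.applyₗ (unit k n) ∘ₗ (rep k n pick hpick hT).toLinearMap

theorem evalUnit_basisFun (hpick : ∀ f, Sg.edgeOf (pick f) = f)
    (hT : ∀ j, 0 < Sg.cycLength n j) (b : Sg.Edge ⊕ PathIdx Sg n ⊕ Sg.Edge) :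
    evalUnit k n pick hpick hT (basisFun k Sg n pick b) = single b 1 := by
  change rep k n pick hpick hT (basisFun k Sg n pick b) (unit k n) = _
  rcases b with f | p | f
  · rw [basisFun, rep_mk, freeRep_gE, unit, map_sum, Finset.sum_eq_single f]
    · rw [idemOp_single, tgtEdge, if_pos rfl]
    · exact fun g _ hg => by rw [idemOp_single, tgtEdge, if_neg hg]
    · exact fun h => absurd (Finset.mem_univ _) h
  · rw [basisFun, rep_mk, pathElem_eq_pathWord]
    exact (freeRep_pathWord_unit _ p.length_pos).trans (path_length p)
  · rw [basisFun, rep_mk, cyc_eq_pathWord, freeRep_pathWord_unit _ (hT _),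
      path_eq_single_cyc hpick hT]

end Model

theorem linearIndependent_basisFun (k : Type) [Field k] (Sg : SGraph) (n : ℕ)
    (pick : Sg.Edge → Sg.H) (hpick : ∀ f, Sg.edgeOf (pick f) = f)
    (hT : ∀ j, 0 < Sg.cycLength n j) : LinearIndependent k (basisFun k Sg n pick) := by
  refine LinearIndependent.of_comp (Model.evalUnit k n pick hpick hT) ?_
  have : Model.evalUnit k n pick hpick hT ∘ basisFun k Sg n pick = Finsupp.basisSingleOne :=
    funext (Model.evalUnit_basisFun hpick hT)
  rw [this]
  exact Finsupp.basisSingleOne.linearIndependent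

section Span

open scoped Classical

variable {k : Type} [Field k] {Sg : SGraph} {n : ℕ}

theorem mk_rel {x y : FA k Sg} (h : Rel k Sg n x y) : mkBGA k Sg n x = mkBGA k Sg n y :=
  RingQuot.mkAlgHom_rel k h

theorem mk_gE_mul_gE (f g : Sg.Edge) :
    mkBGA k Sg n (gE k Sg f) * mkBGA k Sg n (gE k Sg g) =
      if f = g then mkBGA k Sg n (gE k Sg f) else 0 := by
  rw [← map_mul]
  split_ifs with h
  · exact h ▸ mk_rel (Rel.idem f)
  · exact (mk_rel (Rel.orth f g h)).trans (map_zero _)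

theorem mk_gE_mul_gA (f : Sg.Edge) (i : Sg.H) :
    mkBGA k Sg n (gE k Sg f) * mkBGA k Sg n (gA k Sg i) =
      if f = Sg.edgeOf (Sg.succ i) then mkBGA k Sg n (gA k Sg i) else 0 := by
  conv_lhs => rw [← mk_rel (Rel.target i), map_mul, ← mul_assoc, mk_gE_mul_gE]
  split_ifs with h
  · rw [h, ← map_mul, mk_rel (Rel.target i)]
  · rw [zero_mul]

theorem mk_gA_mul_gE (i : Sg.H) (g : Sg.Edge) :
    mkBGA k Sg n (gA k Sg i) * mkBGA k Sg n (gE k Sg g) =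
      if Sg.edgeOf i = g then mkBGA k Sg n (gA k Sg i) else 0 := by
  conv_lhs => rw [← mk_rel (Rel.source i), map_mul, mul_assoc, mk_gE_mul_gE]
  split_ifs with h
  · rw [← map_mul, mk_rel (Rel.source i)]
  · rw [mul_zero]

theorem mk_gE_mul_pathWord (f : Sg.Edge) (j : Sg.H) {t : ℕ} (h0 : 0 < t) :
    mkBGA k Sg n (gE k Sg f) * mkBGA k Sg n (pathWord k Sg j t) =
      if f = Sg.edgeOf (Sg.succ^[t] j) then mkBGA k Sg n (pathWord k Sg j t) else 0 := by
  obtain ⟨s, rfl⟩ := Nat.exists_eq_add_of_lt h0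
  rw [Nat.zero_add, pathWord_succ, map_mul, ← mul_assoc, mk_gE_mul_gA, iterate_succ_apply']
  split_ifs
  · rfl
  · rw [zero_mul]

theorem mk_gA_mul_pathWord_of_ne (i j : Sg.H) {t : ℕ} (h0 : 0 < t) (h : Sg.succ^[t] j ≠ i) :
    mkBGA k Sg n (gA k Sg i) * mkBGA k Sg n (pathWord k Sg j t) = 0 := by
  obtain ⟨s, rfl⟩ := Nat.exists_eq_add_of_lt h0
  rw [Nat.zero_add] at h0 h ⊢
  rw [iterate_succ_apply'] at h
  by_cases he : Sg.edgeOf (Sg.succ (Sg.succ^[s] j)) = Sg.edgeOf i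
  · rw [pathWord_succ, map_mul, ← mul_assoc, ← map_mul, mk_rel (Rel.comp_zero _ i he h),
      map_zero, zero_mul]
  · rw [← mk_rel (Rel.source i), map_mul, mul_assoc, mk_gE_mul_pathWord _ _ h0,
      iterate_succ_apply', if_neg fun h' => he h'.symm, mul_zero]

theorem mk_cyc_eq_smul_mk_cyc_τ (i : Sg.H) :
    mkBGA k Sg n (cyc k Sg n i) = (-1 : k) ^ (n - 1) • mkBGA k Sg n (cyc k Sg n (Sg.τ i)) :=
  (mk_rel (Rel.cycle i)).trans (map_smul _ _ _)

/-- Up to sign `c_j = c_{τ j}`, and a path once around `j` (resp. `τ j`) can only be continued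
by `a_j` (resp. `a_{τ j}`). -/
theorem mk_gA_mul_cyc (hT : ∀ j, 0 < Sg.cycLength n j) (i j : Sg.H) :
    mkBGA k Sg n (gA k Sg i) * mkBGA k Sg n (cyc k Sg n j) = 0 := by
  by_cases h : j = i
  · rw [mk_cyc_eq_smul_mk_cyc_τ, mul_smul_comm, cyc_eq_pathWord,
      mk_gA_mul_pathWord_of_ne _ _ (hT _) (by rw [Sg.iterate_cycLength, ← h]; exact Sg.τ_ne j),
      smul_zero]
  · rw [cyc_eq_pathWord, mk_gA_mul_pathWord_of_ne _ _ (hT _) (by rwa [Sg.iterate_cycLength])]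

variable (pick : Sg.Edge → Sg.H)

theorem one_mem_span_basisFun :
    (1 : BGA k Sg n) ∈ Submodule.span k (Set.range (basisFun k Sg n pick)) := by
  rw [← map_one (mkBGA k Sg n), ← mk_rel Rel.sum_one, map_sum]
  exact Submodule.sum_mem _ fun f _ => Submodule.subset_span ⟨.inl f, rfl⟩

theorem mk_pathWord_mem_span (hpick : ∀ f, Sg.edgeOf (pick f) = f)
    (hT : ∀ j, 0 < Sg.cycLength n j) (j : Sg.H) (t : ℕ) :
    mkBGA k Sg n (pathWord k Sg j t) ∈ Submodule.span k (Set.range (basisFun k Sg n pick)) := by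
  rcases Nat.eq_zero_or_pos t with rfl | h0
  · rw [pathWord_zero, map_one]
    exact one_mem_span_basisFun pick
  rcases lt_trichotomy t (Sg.cycLength n j) with hlt | rfl | hgt
  · refine Submodule.subset_span ⟨.inr (.inl (PathIdx.ofLength j t h0 hlt)), ?_⟩
    rw [basisFun, pathElem_eq_pathWord]
    change mkBGA k Sg n (pathWord k Sg _ (PathIdx.ofLength j t h0 hlt).length) = _
    rw [PathIdx.length_ofLength]
    rfl
  · have hmem : mkBGA k Sg n (cyc k Sg n (pick (Sg.edgeOf j))) ∈
        Submodule.span k (Set.range (basisFun k Sg n pick)) :=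
      Submodule.subset_span ⟨.inr (.inr (Sg.edgeOf j)), rfl⟩
    rw [← cyc_eq_pathWord]
    rcases Sg.edgeOf_eq_edgeOf_iff.1 (hpick (Sg.edgeOf j)) with h | h
    · rwa [h] at hmem
    · rw [mk_cyc_eq_smul_mk_cyc_τ, ← h]
      exact Submodule.smul_mem _ _ hmem
  · obtain ⟨w, rfl⟩ := Nat.exists_eq_add_of_lt hgt
    rw [Nat.add_assoc, Nat.add_comm w 1, pathWord_add, Sg.iterate_cycLength, pathWord_add,
      pathWord_one, map_mul, map_mul, ← cyc_eq_pathWord, mul_assoc, mk_gA_mul_cyc hT, mul_zero]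
    exact Submodule.zero_mem _

theorem mk_ι_mul_gE_mem_span (hpick : ∀ f, Sg.edgeOf (pick f) = f)
    (hT : ∀ j, 0 < Sg.cycLength n j) (z : Sg.Edge ⊕ Sg.H) (g : Sg.Edge) :
    mkBGA k Sg n (FreeAlgebra.ι k z) * mkBGA k Sg n (gE k Sg g) ∈
      Submodule.span k (Set.range (basisFun k Sg n pick)) := by
  rcases z with f | i
  · change mkBGA k Sg n (gE k Sg f) * _ ∈ _
    rw [mk_gE_mul_gE]
    split_ifs
    · exact Submodule.subset_span ⟨.inl f, rfl⟩
    · exact Submodule.zero_mem _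
  · change mkBGA k Sg n (gA k Sg i) * _ ∈ _
    rw [mk_gA_mul_gE]
    split_ifs
    · rw [← pathWord_one]
      exact mk_pathWord_mem_span pick hpick hT i 1
    · exact Submodule.zero_mem _

theorem mk_ι_mul_pathWord_mem_span (hpick : ∀ f, Sg.edgeOf (pick f) = f)
    (hT : ∀ j, 0 < Sg.cycLength n j) (z : Sg.Edge ⊕ Sg.H) (j : Sg.H) {t : ℕ} (h0 : 0 < t) :
    mkBGA k Sg n (FreeAlgebra.ι k z) * mkBGA k Sg n (pathWord k Sg j t) ∈
      Submodule.span k (Set.range (basisFun k Sg n pick)) := by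
  rcases z with f | i
  · change mkBGA k Sg n (gE k Sg f) * _ ∈ _
    rw [mk_gE_mul_pathWord f j h0]
    split_ifs
    · exact mk_pathWord_mem_span pick hpick hT j t
    · exact Submodule.zero_mem _
  · change mkBGA k Sg n (gA k Sg i) * _ ∈ _
    by_cases h : Sg.succ^[t] j = i
    · rw [← h, ← map_mul, ← pathWord_succ]
      exact mk_pathWord_mem_span pick hpick hT j _
    · rw [mk_gA_mul_pathWord_of_ne i j h0 h]
      exact Submodule.zero_mem _

theorem span_basisFun (hpick : ∀ f, Sg.edgeOf (pick f) = f) (hT : ∀ j, 0 < Sg.cycLength n j) :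
    Submodule.span k (Set.range (basisFun k Sg n pick)) = ⊤ := by
  refine Submodule.span_eq_top_of_ι_mul_mem (RingQuot.mkAlgHom_surjective k (Rel k Sg n))
    (one_mem_span_basisFun pick) ?_
  rintro z _ ⟨g | p | f, rfl⟩
  · exact mk_ι_mul_gE_mem_span pick hpick hT z g
  · rw [basisFun, pathElem_eq_pathWord]
    exact mk_ι_mul_pathWord_mem_span pick hpick hT z p.src p.length_pos
  · rw [basisFun, cyc_eq_pathWord]
    exact mk_ι_mul_pathWord_mem_span pick hpick hT z (pick f) (hT _)

end Span

end SGraph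

theorem statement5 (k : Type) [Field k] (Sg : SGraph) (n : ℕ) (hn : 0 < n)
    (hcompat : ∀ v : Sg.V, Sg.deg v ∣ n)
    (pick : Sg.Edge → Sg.H) (hpick : ∀ f : Sg.Edge, Sg.edgeOf (pick f) = f) :
    LinearIndependent k (basisFun k Sg n pick) ∧
    Submodule.span k (Set.range (basisFun k Sg n pick)) = ⊤ ∧
    (∀ p : PathIdx Sg n,
      mkBGA k Sg n (pathElem k Sg p.1.2.1 p.1.1 p.1.2.2) ∈
        BGAcomp k Sg n (Sg.dTo p.1.2.1 p.1.1 + p.1.2.2 * Sg.deg (Sg.vtx p.1.1))) ∧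
    (∀ f : Sg.Edge, mkBGA k Sg n (cyc k Sg n (pick f)) ∈ BGAcomp k Sg n n) ∧
    Module.Finite k (BGA k Sg n) ∧
    Module.finrank k (BGA k Sg n) = ∑ v : Sg.V, Sg.val v ^ 2 * (n / Sg.deg v) := by
  have hT := Sg.cycLength_pos hn hcompat
  have hli := linearIndependent_basisFun k Sg n pick hpick hT
  have hspan := span_basisFun (k := k) pick hpick hT
  let b := Module.Basis.mk hli hspan.ge
  refine ⟨hli, hspan, fun p => ?_, fun f => ?_, .of_basis b, ?_⟩
  · exact Submodule.mem_map_of_mem (pathElem_mem_FAcomp k Sg p.2.1 _)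
  · exact Submodule.mem_map_of_mem (cyc_mem_FAcomp k Sg hcompat _)
  · rw [Module.finrank_eq_card_basis b, card_basisIdx Sg hT]
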